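/- Let k be a commutative unital ring, A a commutative unital k-algebra, and qA = (A[[λ]], ⋆) a formal deformation of A with first-order term C_1; set {f, g} := C_1(f,g) − C_1(g,f). Let P_0 ∈ M_n(A) be an idempotent, E = P_0 A^n, and {x, a}_E := P_0 · ({x_1, a}, …, {x_n, a})^T. Define the curvature R_E(a,b)x := {{x, a}_E, b}_E − {{x, b}_E, a}_E − {x, {a, b}}_E for a, b ∈ A and x ∈ E. Then for each a, b ∈ A the map R_E(a,b) is a right A-linear endomorphism of E: R_E(a,b)(x · c) = (R_E(a,b) x) · c for all x ∈ E, c ∈ A. -/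

import Mathlib

open scoped Matrix

/-- Cauchy-type convolution of two formal series along a family of
coefficient maps `B r : M → N → P`:  `(x ⋆ y) n = ∑_{r+i+j=n} B r (x i) (y j)`. -/
def fdConv {M N P : Type*} [AddCommMonoid P] (B : ℕ → M → N → P)
    (x : ℕ → M) (y : ℕ → N) : ℕ → P := fun n =>
  ∑ p ∈ Finset.HasAntidiagonal.antidiagonal n, ∑ q ∈ Finset.HasAntidiagonal.antidiagonal p.2, B p.1 (x q.1) (y q.2)

/-- The unit formal series `1 + 0·λ + 0·λ² + ⋯`. -/
def fdOne (A : Type*) [One A] [Zero A] : ℕ → A := fun n => if n = 0 then 1 else 0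

/-- An element viewed as a constant (order-zero) formal series. -/
def fdC {A : Type*} [Zero A] (a : A) : ℕ → A := fun n => if n = 0 then a else 0

/-- Coefficientwise star of a formal series. -/
def fdStar {A : Type*} [Star A] (x : ℕ → A) : ℕ → A := fun n => star (x n)

/-- Action of a scalar series `c ∈ k[[λ]]` on series with coefficients in a `k`-module. -/
def fdSmul {k M : Type*} [Semiring k] [AddCommMonoid M] [Module k M]
    (c : ℕ → k) (x : ℕ → M) : ℕ → M := fun n =>
  ∑ p ∈ Finset.HasAntidiagonal.antidiagonal n, c p.1 • x p.2

/-- Order-by-order extension of a family of maps `T r : E → F` to formal series: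
`(T x) n = ∑_{r+j=n} T r (x j)`. -/
def fdMap {E F : Type*} [AddCommMonoid F] (T : ℕ → E → F) (x : ℕ → E) : ℕ → F :=
  fun n => ∑ p ∈ Finset.HasAntidiagonal.antidiagonal n, T p.1 (x p.2)

/-- A formal deformation (à la Gerstenhaber) of a unital `k`-algebra `A`:
a family of `k`-bilinear cochains `C r` with `C 0` the original product, whose
convolution product on `A[[λ]]` is associative and unital (with the same unit). -/
structure FormalDeformation (k A : Type*) [CommRing k] [Ring A] [Algebra k A] where
  C : ℕ → A →ₗ[k] A →ₗ[k] A
  C_zero : ∀ a b : A, C 0 a b = a * b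
  assoc : ∀ x y z : ℕ → A,
    fdConv (fun r a b => C r a b) (fdConv (fun r a b => C r a b) x y) z =
      fdConv (fun r a b => C r a b) x (fdConv (fun r a b => C r a b) y z)
  one_mul : ∀ x : ℕ → A, fdConv (fun r a b => C r a b) (fdOne A) x = x
  mul_one : ∀ x : ℕ → A, fdConv (fun r a b => C r a b) x (fdOne A) = x

namespace FormalDeformation

variable {k A : Type*} [CommRing k] [Ring A] [Algebra k A]

/-- The deformed product on `A[[λ]]`. -/
def mul (D : FormalDeformation k A) : (ℕ → A) → (ℕ → A) → ℕ → A :=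
  fdConv fun r a b => D.C r a b

/-- A deformation of a `*`-algebra is Hermitian if the coefficientwise extension of
the involution is still an involution for the deformed product. -/
def IsHermitian [StarRing A] (D : FormalDeformation k A) : Prop :=
  ∀ x y : ℕ → A, fdStar (D.mul x y) = D.mul (fdStar y) (fdStar x)

/-- The extension of the deformation cochains to matrices. -/
def matC (D : FormalDeformation k A) (n : ℕ) (r : ℕ)
    (L S : Matrix (Fin n) (Fin n) A) : Matrix (Fin n) (Fin n) A :=
  Matrix.of fun i j => ∑ s, D.C r (L i s) (S s j)

/-- The deformed product on `M_n(A)[[λ]] = M_n(A[[λ]])`. -/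
def matMul (D : FormalDeformation k A) (n : ℕ) :
    (ℕ → Matrix (Fin n) (Fin n) A) → (ℕ → Matrix (Fin n) (Fin n) A) →
      ℕ → Matrix (Fin n) (Fin n) A :=
  fdConv (D.matC n)

/-- The deformed left action of `M_n(A)[[λ]]` on column vectors `A^n[[λ]]`. -/
def mvMul (D : FormalDeformation k A) (n : ℕ) :
    (ℕ → Matrix (Fin n) (Fin n) A) → (ℕ → Fin n → A) → ℕ → Fin n → A :=
  fdConv fun r L v => fun i => ∑ j, D.C r (L i j) (v j)

/-- The deformed right action of `A[[λ]]` on column vectors `A^n[[λ]]`. -/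
def vsMul (D : FormalDeformation k A) (n : ℕ) :
    (ℕ → Fin n → A) → (ℕ → A) → ℕ → Fin n → A :=
  fdConv fun r v a => fun i => D.C r (v i) a

end FormalDeformation

/-- The bracket `{x, a}_E = P₀ {x, a}` on `E = P₀Aⁿ` obtained from the
semi-classical limit of the deformed module structure, where
`{f, g} = C₁(f,g) − C₁(g,f)`. -/
def modBracket {k A : Type*} [CommRing k] [CommRing A] [Algebra k A]
    (D : FormalDeformation k A) {n : ℕ} (P₀ : Matrix (Fin n) (Fin n) A)
    (x : Fin n → A) (a : A) : Fin n → A :=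
  P₀.mulVec fun i => D.C 1 (x i) a - D.C 1 a (x i)

/-- The curvature `R_E(a,b) = [{·,a}_E, {·,b}_E] − {·,{a,b}}_E` of the bracket
`{·,·}_E`. -/
def modCurvature {k A : Type*} [CommRing k] [CommRing A] [Algebra k A]
    (D : FormalDeformation k A) {n : ℕ} (P₀ : Matrix (Fin n) (Fin n) A)
    (a b : A) (x : Fin n → A) : Fin n → A :=
  modBracket D P₀ (modBracket D P₀ x a) b - modBracket D P₀ (modBracket D P₀ x b) a
    - modBracket D P₀ x (D.C 1 a b - D.C 1 b a)

/-! The Leibniz rule for `{·,·}` makes `x ↦ {x, a}_E` a connection-like operator: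
`{x c, a}_E = x {c, a} + {x, a}_E c` for `x ∈ E`. Expanding `R_E(a,b)(x c)` with it, all
first-order cross terms cancel between the two iterated brackets and what remains besides
`(R_E(a,b) x) c` is `x ({{c,a},b} − {{c,b},a} − {c,{a,b}})`, which vanishes by the Jacobi
identity. Leibniz and Jacobi are the first- and second-order parts of associativity of `⋆`
on constant series. -/

open Finset

section ConstantSeries

variable {M N P : Type*} [AddCommMonoid P]

theorem sum_antidiagonal_fdC_snd [Zero N] (f : ℕ → N → P) (hf : ∀ r, f r 0 = 0)
    (b : N) (n : ℕ) : ∑ p ∈ antidiagonal n, f p.1 (fdC b p.2) = f n b := by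
  rw [sum_eq_single (n, 0)]
  · simp [fdC]
  · rintro ⟨i, j⟩ hij hne
    have hj : j ≠ 0 := by
      rintro rfl
      rw [HasAntidiagonal.mem_antidiagonal, add_zero] at hij
      exact hne (by rw [← hij])
    simp [fdC, hj, hf]
  · simp

theorem sum_antidiagonal_fdC_fst [Zero M] (f : M → ℕ → P) (hf : ∀ r, f 0 r = 0)
    (a : M) (n : ℕ) : ∑ p ∈ antidiagonal n, f (fdC a p.1) p.2 = f a n := by
  rw [← Nat.sum_antidiagonal_swap]
  exact sum_antidiagonal_fdC_snd (fun r u => f u r) hf a n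

theorem fdConv_fdC_left [Zero M] (B : ℕ → M → N → P) (hB : ∀ r y, B r 0 y = 0)
    (a : M) (y : ℕ → N) (n : ℕ) :
    fdConv B (fdC a) y n = ∑ p ∈ antidiagonal n, B p.1 a (y p.2) :=
  sum_congr rfl fun p _ =>
    sum_antidiagonal_fdC_fst (fun u r => B p.1 u (y r)) (fun r => hB p.1 (y r)) a p.2

theorem fdConv_fdC_right [Zero N] (B : ℕ → M → N → P) (hB : ∀ r x, B r x 0 = 0)
    (x : ℕ → M) (c : N) (n : ℕ) :
    fdConv B x (fdC c) n = ∑ p ∈ antidiagonal n, B p.1 (x p.2) c :=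
  sum_congr rfl fun p _ =>
    sum_antidiagonal_fdC_snd (fun r u => B p.1 (x r) u) (fun r => hB p.1 (x r)) c p.2

theorem fdConv_fdC_fdC [Zero M] [Zero N] (B : ℕ → M → N → P) (hB₀ : ∀ r y, B r 0 y = 0)
    (hB₁ : ∀ r x, B r x 0 = 0) (a : M) (b : N) : fdConv B (fdC a) (fdC b) = fun n => B n a b :=
  funext fun n => (fdConv_fdC_left B hB₀ a _ n).trans
    (sum_antidiagonal_fdC_snd (fun r u => B r a u) (fun r => hB₁ r a) b n)

end ConstantSeries

namespace FormalDeformation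

section Ring

variable {k A : Type*} [CommRing k] [Ring A] [Algebra k A] (D : FormalDeformation k A)

theorem sum_C_C_assoc (a b c : A) (n : ℕ) :
    ∑ p ∈ antidiagonal n, D.C p.1 (D.C p.2 a b) c =
      ∑ p ∈ antidiagonal n, D.C p.1 a (D.C p.2 b c) := by
  have h := congrFun (D.assoc (fdC a) (fdC b) (fdC c)) n
  have hB₀ : ∀ r (y : A), D.C r 0 y = 0 := by simp
  have hB₁ : ∀ r (x : A), D.C r x 0 = 0 := by simp
  rwa [fdConv_fdC_fdC _ hB₀ hB₁, fdConv_fdC_fdC _ hB₀ hB₁, fdConv_fdC_right _ hB₁,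
    fdConv_fdC_left _ hB₀] at h

theorem C_one_mul_add_C_one (a b c : A) :
    D.C 1 a b * c + D.C 1 (a * b) c = a * D.C 1 b c + D.C 1 a (b * c) := by
  simpa [Nat.sum_antidiagonal_eq_sum_range_succ_mk, sum_range_succ, D.C_zero]
    using D.sum_C_C_assoc a b c 1

theorem C_two_mul_add_C_one_C_one_add_C_two (a b c : A) :
    D.C 2 a b * c + D.C 1 (D.C 1 a b) c + D.C 2 (a * b) c =
      a * D.C 2 b c + D.C 1 a (D.C 1 b c) + D.C 2 a (b * c) := by
  simpa [Nat.sum_antidiagonal_eq_sum_range_succ_mk, sum_range_succ, D.C_zero]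
    using D.sum_C_C_assoc a b c 2

def bracket : A →ₗ[k] A →ₗ[k] A := D.C 1 - (D.C 1).flip

theorem bracket_apply (f g : A) : D.bracket f g = D.C 1 f g - D.C 1 g f := rfl

end Ring

section CommRing

variable {k A : Type*} [CommRing k] [CommRing A] [Algebra k A] (D : FormalDeformation k A)

theorem bracket_mul_left (f g h : A) :
    D.bracket (f * g) h = f * D.bracket g h + D.bracket f h * g := by
  have h₁ := D.C_one_mul_add_C_one f g h
  have h₂ := D.C_one_mul_add_C_one h f g
  have h₃ := D.C_one_mul_add_C_one f h g
  rw [mul_comm h f] at h₂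
  rw [mul_comm h g] at h₃
  simp only [bracket_apply]
  linear_combination h₁ + h₂ - h₃

theorem bracket_jacobi (a b c : A) :
    D.bracket (D.bracket c a) b - D.bracket (D.bracket c b) a = D.bracket c (D.bracket a b) := by
  have h₁ := D.C_two_mul_add_C_one_C_one_add_C_two c a b
  have h₂ := D.C_two_mul_add_C_one_C_one_add_C_two a c b
  have h₃ := D.C_two_mul_add_C_one_C_one_add_C_two b c a
  have h₄ := D.C_two_mul_add_C_one_C_one_add_C_two b a c
  have h₅ := D.C_two_mul_add_C_one_C_one_add_C_two c b a
  have h₆ := D.C_two_mul_add_C_one_C_one_add_C_two a b c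
  rw [mul_comm a c, mul_comm c b] at h₂
  rw [mul_comm b a, mul_comm a c] at h₄
  rw [mul_comm c b, mul_comm b a] at h₅
  simp only [bracket_apply, map_sub, LinearMap.sub_apply]
  linear_combination h₁ - h₂ + h₃ - h₄ - h₅ + h₆

end CommRing

end FormalDeformation

theorem Matrix.mulVec_mul_const {ι κ R : Type*} [Fintype κ] [Semiring R]
    (M : Matrix ι κ R) (v : κ → R) (c : R) :
    M *ᵥ (fun i => v i * c) = fun i => (M *ᵥ v) i * c := by
  funext i
  simp [Matrix.mulVec, dotProduct, sum_mul, mul_assoc]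

section ModBracket

variable {k A : Type*} [CommRing k] [CommRing A] [Algebra k A] (D : FormalDeformation k A)
  {n : ℕ} (P₀ : Matrix (Fin n) (Fin n) A)

theorem modBracket_eq (x : Fin n → A) (a : A) :
    modBracket D P₀ x a = P₀ *ᵥ fun i => D.bracket (x i) a := rfl

theorem modBracket_add (u v : Fin n → A) (a : A) :
    modBracket D P₀ (u + v) a = modBracket D P₀ u a + modBracket D P₀ v a := by
  simp only [modBracket_eq, Pi.add_apply, map_add, LinearMap.add_apply]
  exact Matrix.mulVec_add P₀ _ _

theorem mulVec_modBracket (hP₀ : P₀ * P₀ = P₀) (x : Fin n → A) (a : A) :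
    P₀ *ᵥ modBracket D P₀ x a = modBracket D P₀ x a := by
  rw [modBracket_eq, Matrix.mulVec_mulVec, hP₀]

theorem modBracket_mul_const {y : Fin n → A} (hy : P₀ *ᵥ y = y) (c a : A) :
    modBracket D P₀ (fun i => y i * c) a =
      (fun i => y i * D.bracket c a) + fun i => modBracket D P₀ y a i * c := by
  have hsplit : (fun i => D.bracket (y i * c) a) =
      (fun i => y i * D.bracket c a) + fun i => D.bracket (y i) a * c :=
    funext fun i => D.bracket_mul_left (y i) c a
  rw [modBracket_eq, hsplit, Matrix.mulVec_add, Matrix.mulVec_mul_const,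
    Matrix.mulVec_mul_const, hy, modBracket_eq]

theorem modBracket_modBracket_mul_const (hP₀ : P₀ * P₀ = P₀) {x : Fin n → A}
    (hx : P₀ *ᵥ x = x) (a b c : A) (i : Fin n) :
    modBracket D P₀ (modBracket D P₀ (fun j => x j * c) a) b i =
      x i * D.bracket (D.bracket c a) b + modBracket D P₀ x b i * D.bracket c a
        + modBracket D P₀ x a i * D.bracket c b
        + modBracket D P₀ (modBracket D P₀ x a) b i * c := by
  rw [modBracket_mul_const D P₀ hx, modBracket_add, modBracket_mul_const D P₀ hx,
    modBracket_mul_const D P₀ (mulVec_modBracket D P₀ hP₀ x a)]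
  simp only [Pi.add_apply]
  ring

end ModBracket

/-- part of Proposition 3.4. The curvature `R_E(a,b)` is a right
`A`-linear endomorphism of `E = P₀Aⁿ`. -/
theorem curvature_is_A_linear {k A : Type*} [CommRing k] [CommRing A] [Algebra k A]
    (D : FormalDeformation k A)
    (n : ℕ) (P₀ : Matrix (Fin n) (Fin n) A) (hP₀ : P₀ * P₀ = P₀)
    (a b : A) (x : Fin n → A) (hx : P₀.mulVec x = x) (c : A) :
    modCurvature D P₀ a b (fun i => x i * c) =
      fun i => modCurvature D P₀ a b x i * c := by
  funext i
  have hab : D.C 1 a b - D.C 1 b a = D.bracket a b := rfl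
  simp only [modCurvature, hab, Pi.sub_apply]
  rw [modBracket_modBracket_mul_const D P₀ hP₀ hx,
    modBracket_modBracket_mul_const D P₀ hP₀ hx, modBracket_mul_const D P₀ hx, Pi.add_apply]
  linear_combination x i * D.bracket_jacobi a b c
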